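/- Let P be a dynamic path instance and let k ≥ 1 be an integer. Then for all indices with 1 ≤ i ≤ j ≤ n, Θᵏ(P_{i,j}) ≤ Θᵏ(P_{i−1,j}); and for all indices with 0 ≤ i ≤ j < n, Θᵏ(P_{i,j}) ≤ Θᵏ(P_{i,j+1}). That is, extending a subpath by one vertex on either side cannot decrease its optimal k-sink evacuation time. -/

import Mathlib

/-!
At a fixed sink both evacuation times can only grow when a subpath is extended: there are more
source vertices, every prefix (suffix) weight grows, and the bottleneck capacities can only
shrink. So `Θ¹` grows too, since any sink of the extended path, clamped into the shorter path,
is at least as good there. For `Θᵏ`, a partition of the extended path gives one of the shorter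
path of no larger cost by removing the extra vertex from its end interval, or deleting that
interval if it consisted of the extra vertex alone.
-/

/-- A dynamic path instance: `n+1` vertices at strictly increasing coordinates
`x 0 < x 1 < ⋯ < x n`, natural-number weights `w i`, positive integer capacities
`c j` (capacity of the edge from `x (j-1)` to `x j`, for `1 ≤ j ≤ n`), and a
positive travel time `τ` per unit distance. -/
structure DPath where
  n : ℕ
  x : ℕ → ℝ
  w : ℕ → ℕ
  c : ℕ → ℕ
  τ : ℝ
  hx : ∀ i, i < n → x i < x (i + 1)
  hc : ∀ j, 1 ≤ j → j ≤ n → 0 < c j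
  hτ : 0 < τ

/-- `P.W a i = w_a + ⋯ + w_i`. -/
def DPath.W (P : DPath) (a i : ℕ) : ℕ := ∑ j ∈ Finset.Icc a i, P.w j

/-- For a sink at `y` in subpath `P_{a,b}`: the minimum capacity
`min_{i+1 ≤ j ≤ k+1} c_j`, where `k` is the index with `x_k < y ≤ x_{k+1}`;
the edges `j` with `i+1 ≤ j ≤ k+1` are exactly those with `i+1 ≤ j ≤ b` and
`x (j-1) < y`. -/
noncomputable def DPath.cL (P : DPath) (b : ℕ) (y : ℝ) (i : ℕ) : ℕ :=
  sInf (P.c '' {j | i + 1 ≤ j ∧ j ≤ b ∧ P.x (j - 1) < y})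

/-- For a sink at `y` in subpath `P_{a,b}`: the minimum capacity
`min_{k+1 ≤ j ≤ i} c_j`, where `k` is the index with `x_k ≤ y < x_{k+1}`;
the edges `j` with `k+1 ≤ j ≤ i` are exactly those with `a+1 ≤ j ≤ i` and
`y < x j`. -/
noncomputable def DPath.cR (P : DPath) (a : ℕ) (y : ℝ) (i : ℕ) : ℕ :=
  sInf (P.c '' {j | a + 1 ≤ j ∧ j ≤ i ∧ y < P.x j})

/-- Left evacuation time `Θ_L(P_{a,b}, y)`: the maximum, over indices `i` with
`a ≤ i ≤ b`, `x i < y` and `W_{a,i} ≥ 1`, of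
`(y − x_i)·τ + ⌈W_{a,i} / min_{i+1 ≤ j ≤ k+1} c_j⌉ − 1`; it is `0` if no such
index exists. -/
noncomputable def ThetaL (P : DPath) (a b : ℕ) (y : ℝ) : ℝ :=
  sSup (insert 0 {t : ℝ | ∃ i, a ≤ i ∧ i ≤ b ∧ P.x i < y ∧ 1 ≤ P.W a i ∧
    t = (y - P.x i) * P.τ + (⌈(P.W a i : ℝ) / (P.cL b y i : ℝ)⌉ : ℝ) - 1})

/-- Right evacuation time `Θ_R(P_{a,b}, y)`. -/
noncomputable def ThetaR (P : DPath) (a b : ℕ) (y : ℝ) : ℝ :=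
  sSup (insert 0 {t : ℝ | ∃ i, a ≤ i ∧ i ≤ b ∧ y < P.x i ∧ 1 ≤ P.W i b ∧
    t = (P.x i - y) * P.τ + (⌈(P.W i b : ℝ) / (P.cR a y i : ℝ)⌉ : ℝ) - 1})

/-- Evacuation time of subpath `P_{a,b}` to sink `y`. -/
noncomputable def Theta (P : DPath) (a b : ℕ) (y : ℝ) : ℝ :=
  max (ThetaL P a b y) (ThetaR P a b y)

/-- `Θ¹(P_{a,b})`: minimum 1-sink evacuation time of subpath `P_{a,b}`
over sinks `y ∈ [x_a, x_b]`. -/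
noncomputable def Theta1 (P : DPath) (a b : ℕ) : ℝ :=
  sInf (Theta P a b '' Set.Icc (P.x a) (P.x b))

/-- `Θᵏ(P_{a,b})`: minimum over all partitions of `{a, …, b}` into at most `k`
nonempty intervals `[f j, f (j+1) - 1]`, of the maximum over the intervals of
`Θ¹`. -/
noncomputable def ThetaK (P : DPath) (k a b : ℕ) : ℝ :=
  sInf {t : ℝ | ∃ (m : ℕ) (f : ℕ → ℕ), 1 ≤ m ∧ m ≤ k ∧
    f 0 = a ∧ f m = b + 1 ∧ (∀ j, j < m → f j < f (j + 1)) ∧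
    t = ⨆ j : Fin m, Theta1 P (f j.val) (f (j.val + 1) - 1)}

namespace DPath

variable (P : DPath)

lemma x_strictMonoOn : StrictMonoOn P.x (Set.Iic P.n) :=
  strictMonoOn_Iic_of_lt_succ P.hx

lemma x_le_x {i j : ℕ} (hij : i ≤ j) (hj : j ≤ P.n) : P.x i ≤ P.x j :=
  P.x_strictMonoOn.monotoneOn (hij.trans hj) hj hij

lemma W_anti_left {a a' : ℕ} (h : a' ≤ a) (i : ℕ) : P.W a i ≤ P.W a' i :=
  Finset.sum_le_sum_of_subset (Finset.Icc_subset_Icc_left h)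

lemma W_mono_right {b b' : ℕ} (h : b ≤ b') (i : ℕ) : P.W i b ≤ P.W i b' :=
  Finset.sum_le_sum_of_subset (Finset.Icc_subset_Icc_right h)

variable {P}

lemma cL_pos {b i : ℕ} {y : ℝ} (hbn : b ≤ P.n) (hib : i < b) (hxi : P.x i < y) :
    0 < P.cL b y i := by
  obtain ⟨j, ⟨hij, hjb, -⟩, hj⟩ := Nat.sInf_mem
    (s := P.c '' {j | i + 1 ≤ j ∧ j ≤ b ∧ P.x (j - 1) < y})
    ⟨_, i + 1, ⟨le_rfl, hib, by simpa using hxi⟩, rfl⟩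
  rw [cL, ← hj]
  exact P.hc j (by omega) (by omega)

lemma cL_anti {b b' i : ℕ} {y y' : ℝ} (hb : b ≤ b') (hy : y ≤ y') (hib : i < b)
    (hxi : P.x i < y) : P.cL b' y' i ≤ P.cL b y i := by
  refine csInf_le_csInf (OrderBot.bddBelow _)
    ⟨_, i + 1, ⟨le_rfl, hib, by simpa using hxi⟩, rfl⟩ ?_
  rintro t ⟨j, ⟨h1, h2, h3⟩, rfl⟩
  exact ⟨j, ⟨h1, h2.trans hb, h3.trans_le hy⟩, rfl⟩

lemma cR_pos {a i : ℕ} {y : ℝ} (hin : i ≤ P.n) (hai : a < i) (hxi : y < P.x i) :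
    0 < P.cR a y i := by
  obtain ⟨j, ⟨haj, hji, -⟩, hj⟩ := Nat.sInf_mem
    (s := P.c '' {j | a + 1 ≤ j ∧ j ≤ i ∧ y < P.x j})
    ⟨_, i, ⟨hai, le_rfl, hxi⟩, rfl⟩
  rw [cR, ← hj]
  exact P.hc j (by omega) (by omega)

lemma cR_anti {a a' i : ℕ} {y y' : ℝ} (ha : a' ≤ a) (hy : y' ≤ y) (hai : a < i)
    (hxi : y < P.x i) : P.cR a' y' i ≤ P.cR a y i := by
  refine csInf_le_csInf (OrderBot.bddBelow _) ⟨_, i, ⟨hai, le_rfl, hxi⟩, rfl⟩ ?_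
  rintro t ⟨j, ⟨h1, h2, h3⟩, rfl⟩
  exact ⟨j, ⟨by omega, h2, hy.trans_lt h3⟩, rfl⟩

end DPath

open DPath

section Evacuation

variable {P : DPath}

lemma ThetaL_set_bddAbove (P : DPath) (a b : ℕ) (y : ℝ) :
    BddAbove (insert 0 {t : ℝ | ∃ i, a ≤ i ∧ i ≤ b ∧ P.x i < y ∧ 1 ≤ P.W a i ∧
      t = (y - P.x i) * P.τ + (⌈(P.W a i : ℝ) / (P.cL b y i : ℝ)⌉ : ℝ) - 1}) :=
  (((Set.finite_Icc a b).image _).bddAbove.mono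
    (by rintro t ⟨i, h1, h2, -, -, rfl⟩; exact ⟨i, ⟨h1, h2⟩, rfl⟩)).insert 0

lemma ThetaR_set_bddAbove (P : DPath) (a b : ℕ) (y : ℝ) :
    BddAbove (insert 0 {t : ℝ | ∃ i, a ≤ i ∧ i ≤ b ∧ y < P.x i ∧ 1 ≤ P.W i b ∧
      t = (P.x i - y) * P.τ + (⌈(P.W i b : ℝ) / (P.cR a y i : ℝ)⌉ : ℝ) - 1}) :=
  (((Set.finite_Icc a b).image _).bddAbove.mono
    (by rintro t ⟨i, h1, h2, -, -, rfl⟩; exact ⟨i, ⟨h1, h2⟩, rfl⟩)).insert 0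

lemma ThetaL_nonneg (P : DPath) (a b : ℕ) (y : ℝ) : 0 ≤ ThetaL P a b y :=
  le_csSup (ThetaL_set_bddAbove P a b y) (Set.mem_insert _ _)

lemma ThetaR_nonneg (P : DPath) (a b : ℕ) (y : ℝ) : 0 ≤ ThetaR P a b y :=
  le_csSup (ThetaR_set_bddAbove P a b y) (Set.mem_insert _ _)

lemma Theta_nonneg (P : DPath) (a b : ℕ) (y : ℝ) : 0 ≤ Theta P a b y :=
  (ThetaL_nonneg P a b y).trans (le_max_left _ _)

lemma ThetaL_eq_zero_of_le {a b : ℕ} {y : ℝ} (hbn : b ≤ P.n) (hy : y ≤ P.x a) :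
    ThetaL P a b y = 0 := by
  have hempty : {t : ℝ | ∃ i, a ≤ i ∧ i ≤ b ∧ P.x i < y ∧ 1 ≤ P.W a i ∧
      t = (y - P.x i) * P.τ + (⌈(P.W a i : ℝ) / (P.cL b y i : ℝ)⌉ : ℝ) - 1} = ∅ :=
    Set.eq_empty_of_forall_notMem fun t ⟨i, hai, hib, hxi, _⟩ =>
      (hxi.trans_le hy).not_ge (P.x_le_x hai (hib.trans hbn))
  rw [ThetaL, hempty, insert_empty_eq, csSup_singleton]

lemma ThetaR_eq_zero_of_le {a b : ℕ} {y : ℝ} (hbn : b ≤ P.n) (hy : P.x b ≤ y) :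
    ThetaR P a b y = 0 := by
  have hempty : {t : ℝ | ∃ i, a ≤ i ∧ i ≤ b ∧ y < P.x i ∧ 1 ≤ P.W i b ∧
      t = (P.x i - y) * P.τ + (⌈(P.W i b : ℝ) / (P.cR a y i : ℝ)⌉ : ℝ) - 1} = ∅ :=
    Set.eq_empty_of_forall_notMem fun t ⟨i, _, hib, hxi, _⟩ =>
      (hy.trans_lt hxi).not_ge (P.x_le_x hib hbn)
  rw [ThetaR, hempty, insert_empty_eq, csSup_singleton]

lemma ThetaL_le_ThetaL {a a' b b' : ℕ} {y y' : ℝ} (ha : a' ≤ a) (hb : b ≤ b')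
    (hbn : b' ≤ P.n) (hy : y ≤ y') (hyb : y ≤ P.x b) :
    ThetaL P a b y ≤ ThetaL P a' b' y' := by
  refine csSup_le (Set.insert_nonempty _ _) ?_
  rintro t (rfl | ⟨i, hai, hib, hxi, hW, rfl⟩)
  · exact ThetaL_nonneg P a' b' y'
  have hib' : i < b := lt_of_le_of_ne hib (by rintro rfl; exact hyb.not_gt hxi)
  have hpos := cL_pos hbn (hib'.trans_le hb) (hxi.trans_le hy)
  have hcap := cL_anti hb hy hib' hxi
  have hWle := P.W_anti_left ha i
  have hτ := P.hτ.le
  refine le_trans ?_ (le_csSup (ThetaL_set_bddAbove P a' b' y') (Set.mem_insert_of_mem _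
    ⟨i, ha.trans hai, hib.trans hb, hxi.trans_le hy, hW.trans hWle, rfl⟩))
  gcongr

lemma ThetaR_le_ThetaR {a a' b b' : ℕ} {y y' : ℝ} (ha : a' ≤ a) (hb : b ≤ b')
    (hbn : b' ≤ P.n) (hy : y' ≤ y) (hya : P.x a ≤ y) :
    ThetaR P a b y ≤ ThetaR P a' b' y' := by
  refine csSup_le (Set.insert_nonempty _ _) ?_
  rintro t (rfl | ⟨i, hai, hib, hxi, hW, rfl⟩)
  · exact ThetaR_nonneg P a' b' y'
  have hai' : a < i := lt_of_le_of_ne hai (by rintro rfl; exact hya.not_gt hxi)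
  have hpos := cR_pos (hib.trans (hb.trans hbn)) (ha.trans_lt hai') (hy.trans_lt hxi)
  have hcap := cR_anti ha hy hai' hxi
  have hWle := P.W_mono_right hb i
  have hτ := P.hτ.le
  refine le_trans ?_ (le_csSup (ThetaR_set_bddAbove P a' b' y') (Set.mem_insert_of_mem _
    ⟨i, ha.trans hai, hib.trans hb, hy.trans_lt hxi, hW.trans hWle, rfl⟩))
  gcongr

lemma Theta_clamp_le_Theta {a a' b b' : ℕ} (ha : a' ≤ a) (hab : a ≤ b) (hb : b ≤ b')
    (hbn : b' ≤ P.n) (y : ℝ) :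
    Theta P a b (max (P.x a) (min y (P.x b))) ≤ Theta P a' b' y := by
  have hxab := P.x_le_x hab (hb.trans hbn)
  refine max_le_max ?_ ?_
  · rcases le_or_gt y (P.x a) with hya | hay
    · rw [ThetaL_eq_zero_of_le (hb.trans hbn) (max_le le_rfl ((min_le_left _ _).trans hya))]
      exact ThetaL_nonneg P a' b' y
    · exact ThetaL_le_ThetaL ha hb hbn (max_le hay.le (min_le_left _ _))
        (max_le hxab (min_le_right _ _))
  · rcases le_or_gt (P.x b) y with hby | hyb
    · rw [ThetaR_eq_zero_of_le (hb.trans hbn) (by rw [min_eq_right hby, max_eq_right hxab])]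
      exact ThetaR_nonneg P a' b' y
    · exact ThetaR_le_ThetaR ha hb hbn (le_max_of_le_right (le_min le_rfl hyb.le))
        (le_max_left _ _)

lemma Theta1_nonneg (P : DPath) (a b : ℕ) : 0 ≤ Theta1 P a b :=
  Real.sInf_nonneg (by rintro t ⟨y, -, rfl⟩; exact Theta_nonneg P a b y)

lemma Theta1_le_Theta1 {a a' b b' : ℕ} (ha : a' ≤ a) (hab : a ≤ b) (hb : b ≤ b')
    (hbn : b' ≤ P.n) : Theta1 P a b ≤ Theta1 P a' b' := by
  refine le_csInf ((Set.nonempty_Icc.2 (P.x_le_x (ha.trans (hab.trans hb)) hbn)).image _) ?_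
  have hbdd : BddBelow (Theta P a b '' Set.Icc (P.x a) (P.x b)) :=
    ⟨0, by rintro t ⟨z, -, rfl⟩; exact Theta_nonneg P a b z⟩
  have hxab := P.x_le_x hab (hb.trans hbn)
  rintro t ⟨y, -, rfl⟩
  exact (csInf_le hbdd ⟨_, ⟨le_max_left _ _, max_le hxab (min_le_right _ _)⟩, rfl⟩).trans
    (Theta_clamp_le_Theta ha hab hb hbn y)

end Evacuation

/-- `f` cuts `{a, …, b}` into the `m ≤ k` nonempty intervals `[f j, f (j + 1) - 1]`, `j < m`,
as in `ThetaK`. -/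
structure IsIntervalPartition (k a b m : ℕ) (f : ℕ → ℕ) : Prop where
  one_le : 1 ≤ m
  le : m ≤ k
  first : f 0 = a
  last : f m = b + 1
  lt_succ : ∀ j, j < m → f j < f (j + 1)

noncomputable def partitionCost (P : DPath) (m : ℕ) (f : ℕ → ℕ) : ℝ :=
  ⨆ j : Fin m, Theta1 P (f j) (f (j + 1) - 1)

section Partition

variable {P : DPath} {k a b m : ℕ} {f : ℕ → ℕ}

lemma isIntervalPartition_single (hk : 1 ≤ k) (hab : a ≤ b) :
    IsIntervalPartition k a b 1 (fun j => if j = 0 then a else b + 1) :=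
  ⟨le_rfl, hk, rfl, rfl, fun j hj => by
    obtain rfl : j = 0 := by omega
    simp only [zero_add, one_ne_zero, if_true, if_false]
    omega⟩

lemma IsIntervalPartition.monotoneOn (hf : IsIntervalPartition k a b m f) :
    MonotoneOn f (Set.Iic m) :=
  (strictMonoOn_Iic_of_lt_succ hf.lt_succ).monotoneOn

lemma partitionCost_nonneg (P : DPath) (m : ℕ) (f : ℕ → ℕ) : 0 ≤ partitionCost P m f :=
  Real.iSup_nonneg fun _ => Theta1_nonneg P _ _

lemma partitionCost_le_partitionCost {m' : ℕ} {g : ℕ → ℕ}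
    (h : ∀ l < m', ∃ l' < m,
      Theta1 P (g l) (g (l + 1) - 1) ≤ Theta1 P (f l') (f (l' + 1) - 1)) :
    partitionCost P m' g ≤ partitionCost P m f := by
  refine Real.iSup_le (fun l => ?_) (partitionCost_nonneg P m f)
  obtain ⟨l', hl', hle⟩ := h l l.2
  exact hle.trans (le_ciSup (f := fun j : Fin m => Theta1 P (f j) (f (j + 1) - 1))
    (Set.finite_range _).bddAbove ⟨l', hl'⟩)

lemma ThetaK_le_ThetaK_of_forall_exists {a' b' : ℕ} (hk : 1 ≤ k) (hab' : a' ≤ b')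
    (h : ∀ m f, IsIntervalPartition k a' b' m f →
      ∃ m' g, IsIntervalPartition k a b m' g ∧ partitionCost P m' g ≤ partitionCost P m f) :
    ThetaK P k a b ≤ ThetaK P k a' b' := by
  have hbdd : BddBelow {t : ℝ | ∃ (m : ℕ) (f : ℕ → ℕ), 1 ≤ m ∧ m ≤ k ∧
      f 0 = a ∧ f m = b + 1 ∧ (∀ j, j < m → f j < f (j + 1)) ∧
      t = ⨆ j : Fin m, Theta1 P (f j.val) (f (j.val + 1) - 1)} :=
    ⟨0, by rintro t ⟨m, f, -, -, -, -, -, rfl⟩; exact partitionCost_nonneg P m f⟩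
  obtain ⟨h1, hk', h0, hlast, hlt⟩ := isIntervalPartition_single hk hab'
  refine le_csInf ⟨_, 1, _, h1, hk', h0, hlast, hlt, rfl⟩ ?_
  rintro t ⟨m, f, hm, hmk, hf0, hfm, hflt, rfl⟩
  obtain ⟨m', g, ⟨hm', hmk', hg0, hgm, hglt⟩, hcost⟩ := h m f ⟨hm, hmk, hf0, hfm, hflt⟩
  exact (csInf_le hbdd ⟨m', g, hm', hmk', hg0, hgm, hglt, rfl⟩).trans hcost

lemma IsIntervalPartition.exists_cost_le_drop_first (hf : IsIntervalPartition k a b m f)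
    (hab : a < b) (hbn : b ≤ P.n) :
    ∃ m' g, IsIntervalPartition k (a + 1) b m' g ∧
      partitionCost P m' g ≤ partitionCost P m f := by
  have hm1 := hf.one_le
  by_cases hsingleton : f 1 = a + 1
  · have hm2 : m ≠ 1 := by
      rintro rfl
      have := hf.last
      omega
    refine ⟨m - 1, fun l => f (l + 1), ⟨by omega, (Nat.sub_le m 1).trans hf.le, hsingleton,
      by rw [Nat.sub_add_cancel (by omega)]; exact hf.last,
      fun l hl => hf.lt_succ (l + 1) (by omega)⟩, ?_⟩
    exact partitionCost_le_partitionCost fun l hl => ⟨l + 1, by omega, le_rfl⟩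
  · have hf1 : a + 1 < f 1 := by
      have := hf.lt_succ 0 hm1
      rw [zero_add, hf.first] at this
      omega
    have hf1b : f 1 ≤ b + 1 :=
      hf.last ▸ hf.monotoneOn hm1 (Set.mem_Iic.2 le_rfl) hm1
    refine ⟨m, Function.update f 0 (a + 1),
      ⟨hm1, hf.le, Function.update_self .., ?_, ?_⟩, ?_⟩
    · rw [Function.update_of_ne (by omega), hf.last]
    · intro l hl
      rw [Function.update_of_ne l.add_one_ne_zero]
      rcases Nat.eq_zero_or_pos l with rfl | hl0
      · rwa [Function.update_self]
      · rw [Function.update_of_ne hl0.ne']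
        exact hf.lt_succ l hl
    refine partitionCost_le_partitionCost fun l hl => ⟨l, hl, ?_⟩
    rw [Function.update_of_ne l.add_one_ne_zero]
    rcases Nat.eq_zero_or_pos l with rfl | hl0
    · rw [Function.update_self, hf.first, zero_add]
      exact Theta1_le_Theta1 (Nat.le_succ a) (by omega) le_rfl (by omega)
    · rw [Function.update_of_ne hl0.ne']

lemma IsIntervalPartition.exists_cost_le_drop_last (hf : IsIntervalPartition k a (b + 1) m f)
    (hab : a ≤ b) (hbn : b + 1 ≤ P.n) :
    ∃ m' g, IsIntervalPartition k a b m' g ∧ partitionCost P m' g ≤ partitionCost P m f := by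
  have hm1 := hf.one_le
  by_cases hsingleton : f (m - 1) = b + 1
  · have hm2 : m ≠ 1 := by
      rintro rfl
      rw [Nat.sub_self, hf.first] at hsingleton
      omega
    refine ⟨m - 1, f, ⟨by omega, (Nat.sub_le m 1).trans hf.le, hf.first, hsingleton,
      fun l hl => hf.lt_succ l (by omega)⟩, ?_⟩
    exact partitionCost_le_partitionCost fun l hl => ⟨l, by omega, le_rfl⟩
  · have hfm : f (m - 1) ≤ b := by
      have := hf.lt_succ (m - 1) (by omega)
      rw [Nat.sub_add_cancel hm1, hf.last] at this
      omega
    refine ⟨m, Function.update f m (b + 1),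
      ⟨hm1, hf.le, ?_, Function.update_self .., ?_⟩, ?_⟩
    · rw [Function.update_of_ne (by omega), hf.first]
    · intro l hl
      rw [Function.update_of_ne hl.ne]
      by_cases hlast : l + 1 = m
      · rw [hlast, Function.update_self, show l = m - 1 by omega]
        omega
      · rw [Function.update_of_ne hlast]
        exact hf.lt_succ l hl
    refine partitionCost_le_partitionCost fun l hl => ⟨l, hl, ?_⟩
    rw [Function.update_of_ne hl.ne]
    by_cases hlast : l + 1 = m
    · rw [hlast, Function.update_self, hf.last, show l = m - 1 by omega]
      exact Theta1_le_Theta1 le_rfl (by omega) (Nat.le_succ b) hbn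
    · rw [Function.update_of_ne hlast]

end Partition

/-- extending a subpath by one vertex on either side cannot
decrease its optimal `k`-sink evacuation time. -/
theorem stmt10 (P : DPath) (k : ℕ) (hk : 1 ≤ k) :
    (∀ i j, 1 ≤ i → i ≤ j → j ≤ P.n → ThetaK P k i j ≤ ThetaK P k (i - 1) j) ∧
    (∀ i j, i ≤ j → j < P.n → ThetaK P k i j ≤ ThetaK P k i (j + 1)) := by
  constructor
  · intro i j hi hij hjn
    obtain ⟨a, rfl⟩ : ∃ a, i = a + 1 := ⟨i - 1, by omega⟩
    exact ThetaK_le_ThetaK_of_forall_exists hk (by omega) fun m f hf =>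
      hf.exists_cost_le_drop_first (by omega) hjn
  · intro i j hij hjn
    exact ThetaK_le_ThetaK_of_forall_exists hk (by omega) fun m f hf =>
      hf.exists_cost_le_drop_last hij hjn
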